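/- arXiv:2501.07775 — 2 statements merged into one kernel-verified Lean document; each statement's English description precedes it below -/
import Mathlib

section
/- Let α ∈ [1/2, 1) and c ∈ [1/2, 1]. Then (c^((1−α)/α) − 1)/(α − 1) ≥ 1 − c^(1/α). -/
theorem stmt_4 (α c : ℝ) (hα : α ∈ Set.Ico (1/2 : ℝ) 1) (hc : c ∈ Set.Icc (1/2 : ℝ) 1) :
    (c ^ ((1-α)/α) - 1) / (α - 1) ≥ 1 - c ^ (1/α) := by
  obtain ⟨hα1, hα2⟩ := hα
  obtain ⟨hc1, hc2⟩ := hc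
  have hαpos : 0 < α := by linarith
  have hcpos : 0 < c := by linarith
  set x := c ^ (1/α) with hx
  have hxpos : 0 < x := Real.rpow_pos_of_pos hcpos _
  have hkey : c ^ ((1-α)/α) = x ^ (1-α) := by
    rw [hx, ← Real.rpow_mul hcpos.le]
    congr 1
    field_simp
  -- Bernoulli: x^(1-α) ≤ 1 + (1-α)*(x-1)
  have hb : x ^ (1-α) ≤ 1 + (1-α) * (x - 1) := by
    have := rpow_one_add_le_one_add_mul_self (s := x - 1) (p := 1 - α)
      (by linarith) (by linarith) (by linarith)
    simpa using this
  rw [ge_iff_le, le_div_iff_of_neg (by linarith : α - 1 < 0), hkey]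
  nlinarith [hb]
end

section
/- Let α ∈ [1/2, 1) and c ∈ [1/2, 1]. Then 1 − c^(1/α) ≤ (c^((1−α)/α) − 1)/(α − 1) ≤ (c^(α/(1−α)) − 1)/(α − 1), i.e., the chain M_{T,α} ≤ M_{O,α} ≤ M_{S,α} holds. -/
theorem stmt_5 (α c : ℝ) (hα : α ∈ Set.Ico (1/2 : ℝ) 1) (hc : c ∈ Set.Icc (1/2 : ℝ) 1) :
    1 - c ^ (1/α) ≤ (c ^ ((1-α)/α) - 1) / (α - 1) ∧
    (c ^ ((1-α)/α) - 1) / (α - 1) ≤ (c ^ (α/(1-α)) - 1) / (α - 1) := by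
  obtain ⟨hα1, hα2⟩ := hα
  obtain ⟨hc1, hc2⟩ := hc
  have hα0 : (0:ℝ) < α := by linarith
  have hc0 : (0:ℝ) < c := by linarith
  have h1α : (0:ℝ) < 1 - α := by linarith
  have hαne : α - 1 < 0 := by linarith
  constructor
  · -- let u = c ^ (1/α)
    set u := c ^ (1/α) with hu
    have hupos : 0 < u := Real.rpow_pos_of_pos hc0 _
    have hueq : c ^ ((1-α)/α) = u ^ (1-α) := by
      rw [hu, ← Real.rpow_mul hc0.le]
      ring_nf
    have hbern : u ^ (1-α) ≤ 1 + (1-α) * (u - 1) := by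
      have := rpow_one_add_le_one_add_mul_self (s := u - 1) (p := 1 - α)
        (by linarith) h1α.le (by linarith)
      simpa using this
    rw [hueq, le_div_iff_of_neg hαne]
    nlinarith
  · have hle : c ^ (α/(1-α)) ≤ c ^ ((1-α)/α) := by
      apply Real.rpow_le_rpow_of_exponent_ge hc0 hc2
      rw [div_le_div_iff₀ hα0 h1α]
      nlinarith
    have := sub_le_sub_right hle 1
    exact div_le_div_of_nonpos_of_le (by linarith) this
end
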